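/- arXiv:2106.00850 — 3 statements merged into one kernel-verified Lean document; each statement's English description precedes it below -/
import Mathlib

section
/- Let p₁, p₂, p₃, p₄ be four pairwise distinct points of the complex projective line ℙ¹(ℂ) (the projectivization of ℂ²). Then there exist an invertible 2×2 complex matrix M and a nonzero z ∈ ℂ such that the image of the set {p₁, p₂, p₃, p₄} under the projective map induced by M equals the set of projective classes {[z : 1], [1 : z], [−z : 1], [−1 : z]}. (Existence part of the normal-form proposition: every non-degenerate quadruple of points on the Bloch sphere can be mapped by a Möbius transformation onto a normal system z, 1/z, −z, −1/z.) -/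
open scoped LinearAlgebra.Projectivization


lemma det2_ne_zero (v w : Fin 2 → ℂ) (hv : v ≠ 0) (hw : w ≠ 0)
    (h : Projectivization.mk ℂ v hv ≠ Projectivization.mk ℂ w hw) :
    v 0 * w 1 - v 1 * w 0 ≠ 0 := by
  intro hd
  have hd' : v 0 * w 1 = v 1 * w 0 := sub_eq_zero.mp hd
  apply h
  rw [Projectivization.mk_eq_mk_iff']
  by_cases hw0 : w 0 = 0
  · have hw1 : w 1 ≠ 0 := by
      intro hw1; apply hw; funext i; fin_cases i <;> simp [hw0, hw1]
    have hv0 : v 0 = 0 := by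
      have h0 : v 0 * w 1 = 0 := by rw [hd', hw0, mul_zero]
      exact (mul_eq_zero.mp h0).resolve_right hw1
    refine ⟨v 1 / w 1, ?_⟩
    funext i; fin_cases i <;> simp [hw0, hv0, div_mul_cancel₀, hw1]
  · refine ⟨v 0 / w 0, ?_⟩
    funext i; fin_cases i <;> simp
    · field_simp
    · field_simp
      linear_combination hd'

/-- The projective point `[x : y]` of the complex projective line, for `(x, y) ≠ (0, 0)`. -/
noncomputable def projPt (x y : ℂ) (h : x ≠ 0 ∨ y ≠ 0) : ℙ ℂ (Fin 2 → ℂ) :=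
  Projectivization.mk ℂ ![x, y] (by
    intro h0
    rcases h with hx | hy
    · exact hx (by simpa using congrFun h0 0)
    · exact hy (by simpa using congrFun h0 1))

/-- Every quadruple of pairwise distinct points of `ℙ¹(ℂ)` can be mapped, by the Möbius
transformation induced by some invertible matrix `M`, onto a normal system
`{[z : 1], [1 : z], [-z : 1], [-1 : z]}` with `z ≠ 0`. -/
theorem exists_mobius_to_normal_system (p₁ p₂ p₃ p₄ : ℙ ℂ (Fin 2 → ℂ))
    (h12 : p₁ ≠ p₂) (h13 : p₁ ≠ p₃) (h14 : p₁ ≠ p₄)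
    (h23 : p₂ ≠ p₃) (h24 : p₂ ≠ p₄) (h34 : p₃ ≠ p₄) :
    ∃ (M : Matrix (Fin 2) (Fin 2) ℂ) (_ : IsUnit M)
      (hM : Function.Injective M.mulVecLin) (z : ℂ) (_ : z ≠ 0),
      Projectivization.map M.mulVecLin hM '' {p₁, p₂, p₃, p₄} =
        {projPt z 1 (Or.inr one_ne_zero), projPt 1 z (Or.inl one_ne_zero),
         projPt (-z) 1 (Or.inr one_ne_zero),
         projPt (-1) z (Or.inl (neg_ne_zero.mpr one_ne_zero))} := by
  obtain ⟨v₁, hv₁, hp₁⟩ : ∃ v h, Projectivization.mk ℂ v h = p₁ :=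
    ⟨p₁.rep, p₁.rep_nonzero, p₁.mk_rep⟩
  obtain ⟨v₂, hv₂, hp₂⟩ : ∃ v h, Projectivization.mk ℂ v h = p₂ :=
    ⟨p₂.rep, p₂.rep_nonzero, p₂.mk_rep⟩
  obtain ⟨v₃, hv₃, hp₃⟩ : ∃ v h, Projectivization.mk ℂ v h = p₃ :=
    ⟨p₃.rep, p₃.rep_nonzero, p₃.mk_rep⟩
  obtain ⟨v₄, hv₄, hp₄⟩ : ∃ v h, Projectivization.mk ℂ v h = p₄ :=
    ⟨p₄.rep, p₄.rep_nonzero, p₄.mk_rep⟩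
  have hδ := det2_ne_zero v₁ v₂ hv₁ hv₂ (by rw [hp₁, hp₂]; exact h12)
  have hA3 := det2_ne_zero v₃ v₂ hv₃ hv₂ (by rw [hp₃, hp₂]; exact h23.symm)
  have hB3 := det2_ne_zero v₁ v₃ hv₁ hv₃ (by rw [hp₁, hp₃]; exact h13)
  have hA4 := det2_ne_zero v₄ v₂ hv₄ hv₂ (by rw [hp₄, hp₂]; exact h24.symm)
  have hB4 := det2_ne_zero v₁ v₄ hv₁ hv₄ (by rw [hp₁, hp₄]; exact h14)
  have hD34 := det2_ne_zero v₃ v₄ hv₃ hv₄ (by rw [hp₃, hp₄]; exact h34)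
  set δ := v₁ 0 * v₂ 1 - v₁ 1 * v₂ 0 with hδdef
  set A3 := v₃ 0 * v₂ 1 - v₃ 1 * v₂ 0 with hA3def
  set B3 := v₁ 0 * v₃ 1 - v₁ 1 * v₃ 0 with hB3def
  set A4 := v₄ 0 * v₂ 1 - v₄ 1 * v₂ 0 with hA4def
  set B4 := v₁ 0 * v₄ 1 - v₁ 1 * v₄ 0 with hB4def
  have hv3 : ∀ i, δ * v₃ i = A3 * v₁ i + B3 * v₂ i := by
    intro i
    fin_cases i <;> (simp only [Fin.zero_eta, Fin.mk_one, hδdef, hA3def, hB3def]; ring)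
  have hv4 : ∀ i, δ * v₄ i = A4 * v₁ i + B4 * v₂ i := by
    intro i
    fin_cases i <;> (simp only [Fin.zero_eta, Fin.mk_one, hδdef, hA4def, hB4def]; ring)
  have hcross : A3 * B4 - B3 * A4 ≠ 0 := by
    have h : A3 * B4 - B3 * A4 = δ * (v₃ 0 * v₄ 1 - v₃ 1 * v₄ 0) := by
      simp only [hδdef, hA3def, hB3def, hA4def, hB4def]; ring
    rw [h]; exact mul_ne_zero hδ hD34
  have hA3B4 : A3 * B4 ≠ 0 := mul_ne_zero hA3 hB4
  have hB3A4 : B3 * A4 ≠ 0 := mul_ne_zero hB3 hA4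
  obtain ⟨s, hs⟩ := IsAlgClosed.exists_pow_nat_eq (B3 * A4 / (A3 * B4)) (n := 2) (by norm_num)
  have hs2 : s ^ 2 * (A3 * B4) = B3 * A4 := by
    rw [hs]; field_simp
  have hs0 : s ≠ 0 := by
    intro h0
    apply hB3A4
    rw [← hs2, h0]; ring
  have hs1 : s ≠ 1 := by
    intro h1
    apply hcross
    rw [h1] at hs2
    linear_combination hs2
  have hsm1 : s ≠ -1 := by
    intro h1
    apply hcross
    rw [h1] at hs2
    linear_combination hs2
  have h1s : (1 : ℂ) - s ≠ 0 := sub_ne_zero.mpr (Ne.symm hs1)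
  set w := (1 + s) / (1 - s) with hwdef
  have hw : w * (1 - s) = 1 + s := div_mul_cancel₀ _ h1s
  have hw1 : w - 1 = s * (w + 1) := by linear_combination hw
  have hwp1 : w + 1 ≠ 0 := by
    intro h
    have h2 : (2 : ℂ) = 0 := by linear_combination -hw + (1 - s) * h
    norm_num at h2
  have hw0 : w ≠ 0 := by
    intro h0
    apply hsm1
    linear_combination -hw + (1 - s) * h0
  have hwone : w ≠ 1 := by
    intro h
    apply hs0
    linear_combination (-1/2 : ℂ) * hw + ((1 - s)/2) * h
  have hwm1 : w - 1 ≠ 0 := sub_ne_zero.mpr hwone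
  obtain ⟨z, hz⟩ := IsAlgClosed.exists_pow_nat_eq w (n := 2) (by norm_num)
  have hz0 : z ≠ 0 := by
    intro h0
    apply hw0
    rw [← hz, h0]; ring
  set α := A3 * (w - 1) with hαdef
  set β := B3 * (w + 1) with hβdef
  have hαne : α ≠ 0 := mul_ne_zero hA3 hwm1
  have hβne : β ≠ 0 := mul_ne_zero hB3 hwp1
  have hkey : A3 * (w - 1) ^ 2 * B4 = B3 * (w + 1) ^ 2 * A4 := by
    linear_combination (A3 * B4 * ((w - 1) + s * (w + 1))) * hw1 + (w + 1) ^ 2 * hs2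
  set N : Matrix (Fin 2) (Fin 2) ℂ :=
    Matrix.of ![![α * v₁ 0 - β * v₂ 0, z * (α * v₁ 0 + β * v₂ 0)],
                ![α * v₁ 1 - β * v₂ 1, z * (α * v₁ 1 + β * v₂ 1)]] with hNdef
  have hdetN : N.det = 2 * z * α * β * δ := by
    rw [Matrix.det_fin_two]
    simp only [hNdef, hδdef, Matrix.of_apply, Matrix.cons_val', Matrix.cons_val_zero,
      Matrix.cons_val_one, Matrix.head_cons, Matrix.empty_val', Matrix.cons_val_fin_one,
      Matrix.head_fin_const]
    ring
  have hdetu : IsUnit N.det := by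
    rw [hdetN, isUnit_iff_ne_zero]
    exact mul_ne_zero (mul_ne_zero (mul_ne_zero (mul_ne_zero two_ne_zero hz0) hαne) hβne) hδ
  set M := N⁻¹ with hMdef
  have hMN : M * N = 1 := by rw [hMdef]; exact Matrix.nonsing_inv_mul N hdetu
  have hNM : N * M = 1 := by rw [hMdef]; exact Matrix.mul_nonsing_inv N hdetu
  have hMunit : IsUnit M := ⟨⟨M, N, hMN, hNM⟩, rfl⟩
  have hMinj : Function.Injective M.mulVecLin := by
    intro x y hxy
    have h2 : N.mulVec (M.mulVec x) = N.mulVec (M.mulVec y) := by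
      simp only [Matrix.mulVecLin_apply] at hxy
      rw [hxy]
    rwa [Matrix.mulVec_mulVec, Matrix.mulVec_mulVec, hNM, Matrix.one_mulVec,
      Matrix.one_mulVec] at h2
  have key : ∀ (v : Fin 2 → ℂ) (hv : v ≠ 0) (t : Fin 2 → ℂ) (ht : t ≠ 0) (c : ℂ),
      c ≠ 0 → N.mulVec t = c • v →
      Projectivization.map M.mulVecLin hMinj (Projectivization.mk ℂ v hv) =
        Projectivization.mk ℂ t ht := by
    intro v hv t ht c hc hEq
    rw [Projectivization.map_mk, Projectivization.mk_eq_mk_iff']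
    have h2 : M.mulVec (N.mulVec t) = M.mulVec (c • v) := by rw [hEq]
    rw [Matrix.mulVec_mulVec, hMN, Matrix.one_mulVec, Matrix.mulVec_smul] at h2
    refine ⟨c⁻¹, ?_⟩
    rw [Matrix.mulVecLin_apply, h2, smul_smul, inv_mul_cancel₀ hc, one_smul]
  have hz1ne : (![z, 1] : Fin 2 → ℂ) ≠ 0 := by
    intro h0; exact one_ne_zero (α := ℂ) (by simpa using congrFun h0 1)
  have hmz1ne : (![-z, 1] : Fin 2 → ℂ) ≠ 0 := by
    intro h0; exact one_ne_zero (α := ℂ) (by simpa using congrFun h0 1)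
  have h1zne : (![(1 : ℂ), z] : Fin 2 → ℂ) ≠ 0 := by
    intro h0; exact one_ne_zero (α := ℂ) (by simpa using congrFun h0 0)
  have hm1zne : (![(-1 : ℂ), z] : Fin 2 → ℂ) ≠ 0 := by
    intro h0; exact neg_ne_zero.mpr (one_ne_zero (α := ℂ)) (by simpa using congrFun h0 0)
  have e1 : Projectivization.map M.mulVecLin hMinj p₁ = projPt z 1 (Or.inr one_ne_zero) := by
    rw [← hp₁]
    apply key v₁ hv₁ _ hz1ne (2 * z * α)
      (mul_ne_zero (mul_ne_zero two_ne_zero hz0) hαne)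
    funext i
    fin_cases i
    · simp [hNdef, Matrix.mulVec, dotProduct, Fin.sum_univ_two]
      ring
    · simp [hNdef, Matrix.mulVec, dotProduct, Fin.sum_univ_two]
      ring
  have e2 : Projectivization.map M.mulVecLin hMinj p₂ = projPt (-z) 1 (Or.inr one_ne_zero) := by
    rw [← hp₂]
    apply key v₂ hv₂ _ hmz1ne (2 * z * β)
      (mul_ne_zero (mul_ne_zero two_ne_zero hz0) hβne)
    funext i
    fin_cases i
    · simp [hNdef, Matrix.mulVec, dotProduct, Fin.sum_univ_two]
      ring
    · simp [hNdef, Matrix.mulVec, dotProduct, Fin.sum_univ_two]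
      ring
  have e3 : Projectivization.map M.mulVecLin hMinj p₃ = projPt 1 z (Or.inl one_ne_zero) := by
    rw [← hp₃]
    apply key v₃ hv₃ _ h1zne ((w ^ 2 - 1) * δ)
      (by
        have h : w ^ 2 - 1 = (w - 1) * (w + 1) := by ring
        rw [h]
        exact mul_ne_zero (mul_ne_zero hwm1 hwp1) hδ)
    funext i
    fin_cases i
    · simp [hNdef, hαdef, hβdef, Matrix.mulVec, dotProduct, Fin.sum_univ_two]
      linear_combination (A3 * (w - 1) * v₁ 0 + B3 * (w + 1) * v₂ 0) * hz - (w ^ 2 - 1) * hv3 0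
    · simp [hNdef, hαdef, hβdef, Matrix.mulVec, dotProduct, Fin.sum_univ_two]
      linear_combination (A3 * (w - 1) * v₁ 1 + B3 * (w + 1) * v₂ 1) * hz - (w ^ 2 - 1) * hv3 1
  have e4 : Projectivization.map M.mulVecLin hMinj p₄ =
      projPt (-1) z (Or.inl (neg_ne_zero.mpr one_ne_zero)) := by
    rw [← hp₄]
    apply key v₄ hv₄ _ hm1zne (B3 * (w + 1) ^ 2 * δ / B4)
      (div_ne_zero (mul_ne_zero (mul_ne_zero hB3 (pow_ne_zero 2 hwp1)) hδ) hB4)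
    funext i
    fin_cases i
    · simp [hNdef, hαdef, hβdef, Matrix.mulVec, dotProduct, Fin.sum_univ_two]
      rw [div_mul_eq_mul_div, eq_div_iff hB4]
      linear_combination (B4 * (A3 * (w - 1) * v₁ 0 + B3 * (w + 1) * v₂ 0)) * hz
        - B3 * (w + 1) ^ 2 * hv4 0 + v₁ 0 * hkey
    · simp [hNdef, hαdef, hβdef, Matrix.mulVec, dotProduct, Fin.sum_univ_two]
      rw [div_mul_eq_mul_div, eq_div_iff hB4]
      linear_combination (B4 * (A3 * (w - 1) * v₁ 1 + B3 * (w + 1) * v₂ 1)) * hz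
        - B3 * (w + 1) ^ 2 * hv4 1 + v₁ 1 * hkey
  refine ⟨M, hMunit, hMinj, z, hz0, ?_⟩
  rw [Set.image_insert_eq, Set.image_insert_eq, Set.image_insert_eq, Set.image_singleton,
    e1, e2, e3, e4]
  exact congrArg (insert _) (Set.insert_comm _ _ _)
end

section
/- Let p₁, p₂, p₃, p₄ be four pairwise distinct points of ℙ¹(ℂ) and let M and M' be invertible 2×2 complex matrices each of which maps the set {p₁, p₂, p₃, p₄} onto a normal system, i.e. onto a set of the form {[z : 1], [1 : z], [−z : 1], [−1 : z]} for some nonzero z ∈ ℂ (possibly different for M and M'). Then M'·M⁻¹ is a nonzero scalar multiple of an element of the subgroup of GL(2,ℂ) generated by the three matrices Rx = (1/√2)·[[1, −i], [−i, 1]], Ry = (1/√2)·[[1, −1], [1, 1]], Rz = (1/√2)·[[1−i, 0], [0, 1+i]]. (Uniqueness part of the normal-form proposition: the Möbius transformation to normal form is unique up to the 24 rotations of the group 𝒢₂₄.) -/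
open scoped LinearAlgebra.Projectivization
open Complex

/-- The spin-1/2 rotation matrix by angle π/2 about the X axis. -/
noncomputable def Rx : Matrix (Fin 2) (Fin 2) ℂ :=
  ((Real.sqrt 2 : ℂ))⁻¹ • !![1, -I; -I, 1]

/-- The spin-1/2 rotation matrix by angle π/2 about the Y axis. -/
noncomputable def Ry : Matrix (Fin 2) (Fin 2) ℂ :=
  ((Real.sqrt 2 : ℂ))⁻¹ • !![1, -1; 1, 1]

/-- The spin-1/2 rotation matrix by angle π/2 about the Z axis. -/
noncomputable def Rz : Matrix (Fin 2) (Fin 2) ℂ :=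
  ((Real.sqrt 2 : ℂ))⁻¹ • !![1 - I, 0; 0, 1 + I]

/-- The subgroup `𝒢₂₄` of `GL(2,ℂ)` generated by `Rx`, `Ry`, `Rz`. -/
noncomputable def G24 : Subgroup (GL (Fin 2) ℂ) :=
  Subgroup.closure {g : GL (Fin 2) ℂ |
    (g : Matrix (Fin 2) (Fin 2) ℂ) = Rx ∨ (g : Matrix (Fin 2) (Fin 2) ℂ) = Ry ∨
      (g : Matrix (Fin 2) (Fin 2) ℂ) = Rz}

/-- The normal system `{[z : 1], [1 : z], [-z : 1], [-1 : z]}` on the projective line. -/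
noncomputable def normalSystem (z : ℂ) : Set (ℙ ℂ (Fin 2 → ℂ)) :=
  {projPt z 1 (Or.inr one_ne_zero), projPt 1 z (Or.inl one_ne_zero),
   projPt (-z) 1 (Or.inr one_ne_zero),
   projPt (-1) z (Or.inl (neg_ne_zero.mpr one_ne_zero))}

namespace NormalAux

lemma s2mul : (Real.sqrt 2 : ℂ) * (Real.sqrt 2 : ℂ) = 2 := by
  norm_cast
  rw [← Real.sqrt_mul_self (by norm_num : (0:ℝ) ≤ 2)]
  norm_num

lemma s2ne : (Real.sqrt 2 : ℂ) ≠ 0 := by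
  intro h
  have := s2mul
  rw [h] at this
  simp at this

/-- The four slots of a normal system, as vectors. -/
def slotV : Fin 4 → ℂ → ℂ → (Fin 2 → ℂ)
  | ⟨0, _⟩, u, v => ![u, v]
  | ⟨1, _⟩, u, v => ![v, u]
  | ⟨2, _⟩, u, v => ![-u, v]
  | ⟨3, _⟩, u, v => ![-v, u]

@[simp] lemma slotV0 (u v : ℂ) : slotV 0 u v = ![u, v] := rfl
@[simp] lemma slotV1 (u v : ℂ) : slotV 1 u v = ![v, u] := rfl
@[simp] lemma slotV2 (u v : ℂ) : slotV 2 u v = ![-u, v] := rfl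
@[simp] lemma slotV3 (u v : ℂ) : slotV 3 u v = ![-v, u] := rfl

lemma slotV_ne_zero {u v : ℂ} (hu : u ≠ 0) (hv : v ≠ 0) (i : Fin 4) :
    slotV i u v ≠ 0 := by
  fin_cases i <;> intro h <;>
    first
      | exact hu (by simpa using congrFun h 0)
      | exact hv (by simpa using congrFun h 0)

def GoodP (u v : ℂ) : Prop := u ≠ 0 ∧ v ≠ 0 ∧ u ^ 4 ≠ v ^ 4

def SysP (N : Matrix (Fin 2) (Fin 2) ℂ) (u v u' v' : ℂ) (σ : Fin 4 → Fin 4) : Prop :=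
  ∀ i : Fin 4, ∃ a : ℂ, a ≠ 0 ∧ N.mulVec (slotV i u v) = a • slotV (σ i) u' v'

def ConcP (N : Matrix (Fin 2) (Fin 2) ℂ) : Prop :=
  ∃ κ : ℂ, κ ≠ 0 ∧ ∃ g ∈ G24, N = κ • (g : Matrix (Fin 2) (Fin 2) ℂ)

lemma fin4cases (i : Fin 4) : i = 0 ∨ i = 1 ∨ i = 2 ∨ i = 3 := by
  fin_cases i <;> simp

noncomputable def RxU : GL (Fin 2) ℂ :=
  ⟨Rx, ((Real.sqrt 2 : ℂ))⁻¹ • !![1, I; I, 1],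
    by
      ext i j
      fin_cases i <;> fin_cases j <;>
        simp [Rx, Matrix.mul_apply, Fin.sum_univ_two] <;> field_simp <;>
        rw [show (Real.sqrt 2 : ℂ) ^ 2 = 2 by rw [sq, s2mul]] <;> simp [Complex.I_sq] <;> ring,
    by
      ext i j
      fin_cases i <;> fin_cases j <;>
        simp [Rx, Matrix.mul_apply, Fin.sum_univ_two] <;> field_simp <;>
        rw [show (Real.sqrt 2 : ℂ) ^ 2 = 2 by rw [sq, s2mul]] <;> simp [Complex.I_sq] <;> ring⟩

noncomputable def RyU : GL (Fin 2) ℂ :=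
  ⟨Ry, ((Real.sqrt 2 : ℂ))⁻¹ • !![1, 1; -1, 1],
    by
      ext i j
      fin_cases i <;> fin_cases j <;>
        simp [Ry, Matrix.mul_apply, Fin.sum_univ_two] <;> field_simp <;>
        rw [show (Real.sqrt 2 : ℂ) ^ 2 = 2 by rw [sq, s2mul]] <;> ring,
    by
      ext i j
      fin_cases i <;> fin_cases j <;>
        simp [Ry, Matrix.mul_apply, Fin.sum_univ_two] <;> field_simp <;>
        rw [show (Real.sqrt 2 : ℂ) ^ 2 = 2 by rw [sq, s2mul]] <;> ring⟩

noncomputable def RzU : GL (Fin 2) ℂ :=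
  ⟨Rz, ((Real.sqrt 2 : ℂ))⁻¹ • !![1 + I, 0; 0, 1 - I],
    by
      ext i j
      fin_cases i <;> fin_cases j <;>
        simp [Rz, Matrix.mul_apply, Fin.sum_univ_two] <;> field_simp <;>
        rw [show (Real.sqrt 2 : ℂ) ^ 2 = 2 by rw [sq, s2mul]] <;> ring_nf <;> simp [Complex.I_sq] <;> ring_nf,
    by
      ext i j
      fin_cases i <;> fin_cases j <;>
        simp [Rz, Matrix.mul_apply, Fin.sum_univ_two] <;> field_simp <;>
        rw [show (Real.sqrt 2 : ℂ) ^ 2 = 2 by rw [sq, s2mul]] <;> ring_nf <;> simp [Complex.I_sq] <;> ring_nf⟩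

@[simp] lemma RxU_val : (RxU : Matrix (Fin 2) (Fin 2) ℂ) = Rx := rfl
@[simp] lemma RyU_val : (RyU : Matrix (Fin 2) (Fin 2) ℂ) = Ry := rfl
@[simp] lemma RzU_val : (RzU : Matrix (Fin 2) (Fin 2) ℂ) = Rz := rfl

lemma RxU_mem : RxU ∈ G24 := Subgroup.subset_closure (Or.inl rfl)
lemma RyU_mem : RyU ∈ G24 := Subgroup.subset_closure (Or.inr (Or.inl rfl))
lemma RzU_mem : RzU ∈ G24 := Subgroup.subset_closure (Or.inr (Or.inr rfl))

lemma s2inv : (Real.sqrt 2 : ℂ)⁻¹ * (Real.sqrt 2 : ℂ)⁻¹ = (2 : ℂ)⁻¹ := by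
  rw [← mul_inv, s2mul]

lemma RxSq : Rx * Rx = !![0, -I; -I, 0] := by
  have hI := Complex.I_sq
  have hs := s2inv
  ext i j
  fin_cases i <;> fin_cases j <;>
    simp [Rx, Matrix.mul_apply, Fin.sum_univ_two]
  · linear_combination ((Real.sqrt 2 : ℂ)⁻¹*(Real.sqrt 2 : ℂ)⁻¹) * hI
  · linear_combination (-2*I) * hs
  · linear_combination (-2*I) * hs
  · linear_combination ((Real.sqrt 2 : ℂ)⁻¹*(Real.sqrt 2 : ℂ)⁻¹) * hI

lemma RySq : Ry * Ry = !![0, -1; 1, 0] := by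
  have hs := s2inv
  ext i j
  fin_cases i <;> fin_cases j <;>
    simp [Ry, Matrix.mul_apply, Fin.sum_univ_two]
  · linear_combination (-2:ℂ) * hs
  · linear_combination (2:ℂ) * hs

lemma RzSq : Rz * Rz = !![-I, 0; 0, I] := by
  have hI := Complex.I_sq
  have hs := s2inv
  ext i j
  fin_cases i <;> fin_cases j <;>
    simp [Rz, Matrix.mul_apply, Fin.sum_univ_two]
  · linear_combination ((Real.sqrt 2 : ℂ)⁻¹*(Real.sqrt 2 : ℂ)⁻¹) * hI + (-2*I) * hs
  · linear_combination ((Real.sqrt 2 : ℂ)⁻¹*(Real.sqrt 2 : ℂ)⁻¹) * hI + (2*I) * hs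
lemma conc_transfer (g : GL (Fin 2) ℂ) (hg : g ∈ G24) {N : Matrix (Fin 2) (Fin 2) ℂ}
    (h : ConcP ((g : Matrix (Fin 2) (Fin 2) ℂ) * N)) : ConcP N := by
  obtain ⟨κ, hκ, g', hg', he⟩ := h
  refine ⟨κ, hκ, g⁻¹ * g', mul_mem (inv_mem hg) hg', ?_⟩
  have h2 : ((g⁻¹ : GL (Fin 2) ℂ) : Matrix (Fin 2) (Fin 2) ℂ) *
      ((g : Matrix (Fin 2) (Fin 2) ℂ) * N) = N := by
    rw [← Matrix.mul_assoc, ← Units.val_mul, inv_mul_cancel]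
    simp
  rw [← h2, he, Matrix.mul_smul, ← Units.val_mul]

lemma sys_comp {G N : Matrix (Fin 2) (Fin 2) ℂ} {u v u' v' u'' v'' : ℂ}
    {σ π : Fin 4 → Fin 4} (hG : SysP G u' v' u'' v'' π) (hN : SysP N u v u' v' σ) :
    SysP (G * N) u v u'' v'' (π ∘ σ) := by
  intro i
  obtain ⟨a, ha, hEq⟩ := hN i
  obtain ⟨b, hb, hEq'⟩ := hG (σ i)
  refine ⟨a * b, mul_ne_zero ha hb, ?_⟩
  rw [← Matrix.mulVec_mulVec, hEq, Matrix.mulVec_smul, hEq', smul_smul]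
  rfl

lemma sysRx (u v : ℂ) : SysP Rx u v (u - I*v) (v - I*u) ![0, 1, 3, 2] := by
  have hI := Complex.I_sq
  intro i
  fin_cases i
  · refine ⟨(Real.sqrt 2 : ℂ)⁻¹, inv_ne_zero s2ne, funext fun j => ?_⟩
    fin_cases j <;>
      simp [Rx, Matrix.mulVec, dotProduct, Fin.sum_univ_two] <;> try ring
  · refine ⟨(Real.sqrt 2 : ℂ)⁻¹, inv_ne_zero s2ne, funext fun j => ?_⟩
    fin_cases j <;>
      simp [Rx, Matrix.mulVec, dotProduct, Fin.sum_univ_two] <;> try ring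
  · refine ⟨(Real.sqrt 2 : ℂ)⁻¹ * I, mul_ne_zero (inv_ne_zero s2ne) I_ne_zero,
      funext fun j => ?_⟩
    fin_cases j <;>
      simp [Rx, Matrix.mulVec, dotProduct, Fin.sum_univ_two]
    · linear_combination (-(Real.sqrt 2 : ℂ)⁻¹*u) * hI
    · linear_combination ((Real.sqrt 2 : ℂ)⁻¹*v) * hI
  · refine ⟨(Real.sqrt 2 : ℂ)⁻¹ * I, mul_ne_zero (inv_ne_zero s2ne) I_ne_zero,
      funext fun j => ?_⟩
    fin_cases j <;>
      simp [Rx, Matrix.mulVec, dotProduct, Fin.sum_univ_two]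
    · linear_combination (-(Real.sqrt 2 : ℂ)⁻¹*v) * hI
    · linear_combination ((Real.sqrt 2 : ℂ)⁻¹*u) * hI

lemma sysRy (u v : ℂ) : SysP Ry u v (u - v) (u + v) ![0, 2, 1, 3] := by
  intro i
  fin_cases i
  · refine ⟨(Real.sqrt 2 : ℂ)⁻¹, inv_ne_zero s2ne, funext fun j => ?_⟩
    fin_cases j <;>
      simp [Ry, Matrix.mulVec, dotProduct, Fin.sum_univ_two] <;> try ring
  · refine ⟨(Real.sqrt 2 : ℂ)⁻¹, inv_ne_zero s2ne, funext fun j => ?_⟩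
    fin_cases j <;>
      simp [Ry, Matrix.mulVec, dotProduct, Fin.sum_univ_two] <;> try ring
  · refine ⟨-(Real.sqrt 2 : ℂ)⁻¹, neg_ne_zero.mpr (inv_ne_zero s2ne), funext fun j => ?_⟩
    fin_cases j <;>
      simp [Ry, Matrix.mulVec, dotProduct, Fin.sum_univ_two] <;> try ring
  · refine ⟨(Real.sqrt 2 : ℂ)⁻¹, inv_ne_zero s2ne, funext fun j => ?_⟩
    fin_cases j <;>
      simp [Ry, Matrix.mulVec, dotProduct, Fin.sum_univ_two] <;> try ring

lemma sysRz (u v : ℂ) : SysP Rz u v ((1 - I)*u) ((1 + I)*v) ![0, 3, 2, 1] := by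
  have hI := Complex.I_sq
  intro i
  fin_cases i
  · refine ⟨(Real.sqrt 2 : ℂ)⁻¹, inv_ne_zero s2ne, funext fun j => ?_⟩
    fin_cases j <;>
      simp [Rz, Matrix.mulVec, dotProduct, Fin.sum_univ_two] <;> try ring
  · refine ⟨(Real.sqrt 2 : ℂ)⁻¹ * I, mul_ne_zero (inv_ne_zero s2ne) I_ne_zero,
      funext fun j => ?_⟩
    fin_cases j <;>
      simp [Rz, Matrix.mulVec, dotProduct, Fin.sum_univ_two]
    · linear_combination ((Real.sqrt 2 : ℂ)⁻¹*v) * hI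
    · linear_combination ((Real.sqrt 2 : ℂ)⁻¹*u) * hI
  · refine ⟨(Real.sqrt 2 : ℂ)⁻¹, inv_ne_zero s2ne, funext fun j => ?_⟩
    fin_cases j <;>
      simp [Rz, Matrix.mulVec, dotProduct, Fin.sum_univ_two] <;> try ring
  · refine ⟨(Real.sqrt 2 : ℂ)⁻¹ * I, mul_ne_zero (inv_ne_zero s2ne) I_ne_zero,
      funext fun j => ?_⟩
    fin_cases j <;>
      simp [Rz, Matrix.mulVec, dotProduct, Fin.sum_univ_two]
    · linear_combination (-(Real.sqrt 2 : ℂ)⁻¹*v) * hI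
    · linear_combination ((Real.sqrt 2 : ℂ)⁻¹*u) * hI

lemma sysX2 (u v : ℂ) : SysP (Rx * Rx) u v u v ![1, 0, 3, 2] := by
  rw [RxSq]
  intro i
  fin_cases i
  · exact ⟨-I, neg_ne_zero.mpr I_ne_zero, funext fun j => by
      fin_cases j <;>
        simp [Matrix.mulVec, dotProduct, Fin.sum_univ_two] <;> try ring⟩
  · exact ⟨-I, neg_ne_zero.mpr I_ne_zero, funext fun j => by
      fin_cases j <;>
        simp [Matrix.mulVec, dotProduct, Fin.sum_univ_two] <;> try ring⟩
  · exact ⟨I, I_ne_zero, funext fun j => by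
      fin_cases j <;>
        simp [Matrix.mulVec, dotProduct, Fin.sum_univ_two] <;> try ring⟩
  · exact ⟨I, I_ne_zero, funext fun j => by
      fin_cases j <;>
        simp [Matrix.mulVec, dotProduct, Fin.sum_univ_two] <;> try ring⟩

lemma sysY2 (u v : ℂ) : SysP (Ry * Ry) u v u v ![3, 2, 1, 0] := by
  rw [RySq]
  intro i
  fin_cases i
  · exact ⟨1, one_ne_zero, funext fun j => by
      fin_cases j <;>
        simp [Matrix.mulVec, dotProduct, Fin.sum_univ_two] <;> try ring⟩
  · exact ⟨1, one_ne_zero, funext fun j => by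
      fin_cases j <;>
        simp [Matrix.mulVec, dotProduct, Fin.sum_univ_two] <;> try ring⟩
  · exact ⟨-1, neg_ne_zero.mpr one_ne_zero, funext fun j => by
      fin_cases j <;>
        simp [Matrix.mulVec, dotProduct, Fin.sum_univ_two] <;> try ring⟩
  · exact ⟨-1, neg_ne_zero.mpr one_ne_zero, funext fun j => by
      fin_cases j <;>
        simp [Matrix.mulVec, dotProduct, Fin.sum_univ_two] <;> try ring⟩

lemma sysZ2 (u v : ℂ) : SysP (Rz * Rz) u v u v ![2, 3, 0, 1] := by
  rw [RzSq]
  intro i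
  fin_cases i <;>
    exact ⟨I, I_ne_zero, funext fun j => by
      fin_cases j <;>
        simp [Matrix.mulVec, dotProduct, Fin.sum_univ_two] <;> try ring⟩
lemma sq_ne_of_pow4 {u v : ℂ} (h : u ^ 4 ≠ v ^ 4) :
    u ^ 2 ≠ v ^ 2 ∧ u ^ 2 ≠ -v ^ 2 := by
  constructor <;> intro h2 <;> apply h
  · linear_combination (u^2 + v^2) * h2
  · linear_combination (u^2 - v^2) * h2

lemma goodRx {u v : ℂ} (h : GoodP u v) : GoodP (u - I*v) (v - I*u) := by
  obtain ⟨hu, hv, h4⟩ := h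
  have hI := Complex.I_sq
  refine ⟨?_, ?_, ?_⟩
  · intro h0
    apply h4
    linear_combination (u^3 + I*u^2*v + I^2*u*v^2 + I^3*v^3) * h0 + (v^4*(I^2-1)) * hI
  · intro h0
    apply h4
    linear_combination (-(v^3 + I*v^2*u + I^2*v*u^2 + I^3*u^3)) * h0 - (u^4*(I^2-1)) * hI
  · intro h0
    have key : u*v*(u^2 - v^2) = 0 := by
      linear_combination (I/8) * h0 +
        (-u*v^3 + u^3*v + (I/8)*v^4 + (-I/8)*u^4 + (I^2/2)*u*v^3 + (-I^2/2)*u^3*v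
          + (-I^3/8)*v^4 + (I^3/8)*u^4) * hI
    rcases mul_eq_zero.mp key with k | k
    · rcases mul_eq_zero.mp k with k' | k'
      · exact hu k'
      · exact hv k'
    · exact (sq_ne_of_pow4 h4).1 (by linear_combination k)

lemma goodRy {u v : ℂ} (h : GoodP u v) : GoodP (u - v) (u + v) := by
  obtain ⟨hu, hv, h4⟩ := h
  refine ⟨?_, ?_, ?_⟩
  · intro h0
    exact h4 (by linear_combination (u^3 + u^2*v + u*v^2 + v^3) * h0)
  · intro h0
    exact h4 (by linear_combination (u^3 - u^2*v + u*v^2 - v^3) * h0)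
  · intro h0
    have key : u*v*(u^2 + v^2) = 0 := by
      linear_combination (-(1:ℂ)/8) * h0
    rcases mul_eq_zero.mp key with k | k
    · rcases mul_eq_zero.mp k with k' | k'
      · exact hu k'
      · exact hv k'
    · exact (sq_ne_of_pow4 h4).2 (by linear_combination k)

lemma one_sub_I_ne : (1 - I : ℂ) ≠ 0 := by
  intro h
  have := congrArg Complex.re h
  simp at this

lemma one_add_I_ne : (1 + I : ℂ) ≠ 0 := by
  intro h
  have := congrArg Complex.re h
  simp at this

lemma goodRz {u v : ℂ} (h : GoodP u v) : GoodP ((1 - I)*u) ((1 + I)*v) := by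
  obtain ⟨hu, hv, h4⟩ := h
  have hI := Complex.I_sq
  refine ⟨mul_ne_zero one_sub_I_ne hu, mul_ne_zero one_add_I_ne hv, ?_⟩
  intro h0
  apply h4
  linear_combination (-(1:ℂ)/4) * h0 +
    ((-5/4)*v^4 + (5/4)*u^4 + (-1)*I*v^4 + (-1)*I*u^4 + (-1/4)*I^2*v^4 + (1/4)*I^2*u^4) * hI
lemma slot_inj {u v : ℂ} (hg : GoodP u v) {a b : ℂ} (ha : a ≠ 0) {i j : Fin 4}
    (h : a • slotV i u v = b • slotV j u v) : i = j := by
  fin_cases i <;> fin_cases j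
  · rfl
  · exfalso
    have h0 : a * (u) = b * (v) := congrFun h 0
    have h1 : a * (v) = b * (u) := congrFun h 1
    have hD : a * ((u)*(u) - (v)*(v)) = 0 := by
      linear_combination (u) * h0 + (-(v)) * h1
    have hD' : ((u)*(u) - (v)*(v)) = 0 := (mul_eq_zero.mp hD).resolve_left ha
    exact (sq_ne_of_pow4 hg.2.2).1 (by linear_combination hD')
  · exfalso
    have h0 : a * (u) = b * (-u) := congrFun h 0
    have h1 : a * (v) = b * (v) := congrFun h 1
    have hD : a * ((u)*(v) - (v)*(-u)) = 0 := by
      linear_combination (v) * h0 + (-(-u)) * h1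
    have hD' : ((u)*(v) - (v)*(-u)) = 0 := (mul_eq_zero.mp hD).resolve_left ha
    rcases mul_eq_zero.mp (show u * v = 0 by linear_combination (1/2 : ℂ) * hD') with k | k
    · exact hg.1 k
    · exact hg.2.1 k
  · exfalso
    have h0 : a * (u) = b * (-v) := congrFun h 0
    have h1 : a * (v) = b * (u) := congrFun h 1
    have hD : a * ((u)*(u) - (v)*(-v)) = 0 := by
      linear_combination (u) * h0 + (-(-v)) * h1
    have hD' : ((u)*(u) - (v)*(-v)) = 0 := (mul_eq_zero.mp hD).resolve_left ha
    exact (sq_ne_of_pow4 hg.2.2).2 (by linear_combination hD')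
  · exfalso
    have h0 : a * (v) = b * (u) := congrFun h 0
    have h1 : a * (u) = b * (v) := congrFun h 1
    have hD : a * ((v)*(v) - (u)*(u)) = 0 := by
      linear_combination (v) * h0 + (-(u)) * h1
    have hD' : ((v)*(v) - (u)*(u)) = 0 := (mul_eq_zero.mp hD).resolve_left ha
    exact (sq_ne_of_pow4 hg.2.2).1 (by linear_combination -hD')
  · rfl
  · exfalso
    have h0 : a * (v) = b * (-u) := congrFun h 0
    have h1 : a * (u) = b * (v) := congrFun h 1
    have hD : a * ((v)*(v) - (u)*(-u)) = 0 := by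
      linear_combination (v) * h0 + (-(-u)) * h1
    have hD' : ((v)*(v) - (u)*(-u)) = 0 := (mul_eq_zero.mp hD).resolve_left ha
    exact (sq_ne_of_pow4 hg.2.2).2 (by linear_combination hD')
  · exfalso
    have h0 : a * (v) = b * (-v) := congrFun h 0
    have h1 : a * (u) = b * (u) := congrFun h 1
    have hD : a * ((v)*(u) - (u)*(-v)) = 0 := by
      linear_combination (u) * h0 + (-(-v)) * h1
    have hD' : ((v)*(u) - (u)*(-v)) = 0 := (mul_eq_zero.mp hD).resolve_left ha
    rcases mul_eq_zero.mp (show u * v = 0 by linear_combination (1/2 : ℂ) * hD') with k | k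
    · exact hg.1 k
    · exact hg.2.1 k
  · exfalso
    have h0 : a * (-u) = b * (u) := congrFun h 0
    have h1 : a * (v) = b * (v) := congrFun h 1
    have hD : a * ((-u)*(v) - (v)*(u)) = 0 := by
      linear_combination (v) * h0 + (-(u)) * h1
    have hD' : ((-u)*(v) - (v)*(u)) = 0 := (mul_eq_zero.mp hD).resolve_left ha
    rcases mul_eq_zero.mp (show u * v = 0 by linear_combination (-1/2 : ℂ) * hD') with k | k
    · exact hg.1 k
    · exact hg.2.1 k
  · exfalso
    have h0 : a * (-u) = b * (v) := congrFun h 0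
    have h1 : a * (v) = b * (u) := congrFun h 1
    have hD : a * ((-u)*(u) - (v)*(v)) = 0 := by
      linear_combination (u) * h0 + (-(v)) * h1
    have hD' : ((-u)*(u) - (v)*(v)) = 0 := (mul_eq_zero.mp hD).resolve_left ha
    exact (sq_ne_of_pow4 hg.2.2).2 (by linear_combination -hD')
  · rfl
  · exfalso
    have h0 : a * (-u) = b * (-v) := congrFun h 0
    have h1 : a * (v) = b * (u) := congrFun h 1
    have hD : a * ((-u)*(u) - (v)*(-v)) = 0 := by
      linear_combination (u) * h0 + (-(-v)) * h1
    have hD' : ((-u)*(u) - (v)*(-v)) = 0 := (mul_eq_zero.mp hD).resolve_left ha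
    exact (sq_ne_of_pow4 hg.2.2).1 (by linear_combination -hD')
  · exfalso
    have h0 : a * (-v) = b * (u) := congrFun h 0
    have h1 : a * (u) = b * (v) := congrFun h 1
    have hD : a * ((-v)*(v) - (u)*(u)) = 0 := by
      linear_combination (v) * h0 + (-(u)) * h1
    have hD' : ((-v)*(v) - (u)*(u)) = 0 := (mul_eq_zero.mp hD).resolve_left ha
    exact (sq_ne_of_pow4 hg.2.2).2 (by linear_combination -hD')
  · exfalso
    have h0 : a * (-v) = b * (v) := congrFun h 0
    have h1 : a * (u) = b * (u) := congrFun h 1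
    have hD : a * ((-v)*(u) - (u)*(v)) = 0 := by
      linear_combination (u) * h0 + (-(v)) * h1
    have hD' : ((-v)*(u) - (u)*(v)) = 0 := (mul_eq_zero.mp hD).resolve_left ha
    rcases mul_eq_zero.mp (show u * v = 0 by linear_combination (-1/2 : ℂ) * hD') with k | k
    · exact hg.1 k
    · exact hg.2.1 k
  · exfalso
    have h0 : a * (-v) = b * (-u) := congrFun h 0
    have h1 : a * (u) = b * (v) := congrFun h 1
    have hD : a * ((-v)*(v) - (u)*(-u)) = 0 := by
      linear_combination (v) * h0 + (-(-u)) * h1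
    have hD' : ((-v)*(v) - (u)*(-u)) = 0 := (mul_eq_zero.mp hD).resolve_left ha
    exact (sq_ne_of_pow4 hg.2.2).1 (by linear_combination hD')
  · rfl
set_option maxHeartbeats 1000000 in
lemma core {N : Matrix (Fin 2) (Fin 2) ℂ} {u v u' v' : ℂ}
    (hu : u ≠ 0) (hv : v ≠ 0) (h4 : u ^ 4 ≠ v ^ 4) (hu' : u' ≠ 0) (hv' : v' ≠ 0)
    (h : SysP N u v u' v' id) : ConcP N := by
  have hI := Complex.I_sq
  have hc : (2*u*v : ℂ) ≠ 0 := mul_ne_zero (mul_ne_zero two_ne_zero hu) hv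
  obtain ⟨a1, ha1, e1⟩ := h 0
  obtain ⟨a2, ha2, e2⟩ := h 1
  obtain ⟨a3, ha3, e3⟩ := h 2
  obtain ⟨a4, ha4, e4⟩ := h 3
  have e10 := congrFun e1 0
  have e11 := congrFun e1 1
  have e20 := congrFun e2 0
  have e21 := congrFun e2 1
  have e30 := congrFun e3 0
  have e31 := congrFun e3 1
  have e40 := congrFun e4 0
  have e41 := congrFun e4 1
  simp only [Matrix.mulVec, dotProduct, Fin.sum_univ_two, slotV0, slotV1, slotV2,
    slotV3, Matrix.cons_val_zero, Matrix.cons_val_one, Matrix.head_cons, Pi.smul_apply,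
    smul_eq_mul, id_eq, Fin.isValue] at e10 e11 e20 e21 e30 e31 e40 e41
  have hE : 2*(N 0 0)*u = (a1+a3)*u' := by linear_combination e10 - e30
  have hF : 2*(N 0 1)*v = (a1-a3)*u' := by linear_combination e10 + e30
  have hG : 2*(N 1 0)*u = (a1-a3)*v' := by linear_combination e11 - e31
  have hH : 2*(N 1 1)*v = (a1+a3)*v' := by linear_combination e11 + e31
  have i1 : (a1+a3)*u'*v^2 + (a1-a3)*u'*u^2 = 2*a2*u*v*v' := by
    linear_combination (2*u*v)*e20 - v^2*hE - u^2*hF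
  have i2 : (a1-a3)*v'*v^2 + (a1+a3)*v'*u^2 = 2*a2*u*v*u' := by
    linear_combination (2*u*v)*e21 - v^2*hG - u^2*hH
  have i3 : (a1+a3)*u'*v^2 - (a1-a3)*u'*u^2 = 2*a4*u*v*v' := by
    linear_combination (-2*u*v)*e40 - v^2*hE + u^2*hF
  have i4 : -((a1-a3)*v'*v^2) + (a1+a3)*v'*u^2 = 2*a4*u*v*u' := by
    linear_combination (2*u*v)*e41 + v^2*hG - u^2*hH
  have hQ : (a1-a3)*((u*u' - v*v')*(u*u' + v*v')) = 0 := by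
    linear_combination (u'/2)*i1 - (v'/2)*i2 - (u'/2)*i3 + (v'/2)*i4
  have hP : (a1+a3)*((v*u' - u*v')*(v*u' + u*v')) = 0 := by
    linear_combination (u'/2)*i1 - (v'/2)*i2 + (u'/2)*i3 - (v'/2)*i4
  by_cases hq0 : a1 - a3 = 0
  · have hpne : a1 + a3 ≠ 0 := by
      intro hh
      exact ha1 (by linear_combination (hh + hq0)/2)
    rcases mul_eq_zero.mp ((mul_eq_zero.mp hP).resolve_left hpne) with E1 | E2
    · -- N is a scalar multiple of the identity
      refine ⟨a1*u'/u, div_ne_zero (mul_ne_zero ha1 hu') hu, 1, one_mem _, ?_⟩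
      have hgval : ((1 : GL (Fin 2) ℂ) : Matrix (Fin 2) (Fin 2) ℂ) = !![1,0;0,1] := by
        rw [Units.val_one]
        ext i j
        fin_cases i <;> fin_cases j <;> simp [Matrix.one_apply]
      rw [hgval]
      refine smul_right_injective (Matrix (Fin 2) (Fin 2) ℂ) hc ?_
      dsimp only
      rw [smul_smul]
      have hd : 2*u*v*(a1*u'/u) = 2*v*a1*u' := by field_simp
      rw [hd]
      ext i j
      fin_cases i <;> fin_cases j <;> simp only [Matrix.smul_apply, smul_eq_mul, Matrix.cons_val', Matrix.cons_val_zero,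
        Matrix.cons_val_one, Matrix.head_cons, Matrix.head_fin_const, Matrix.empty_val',
        Matrix.cons_val_fin_one, Fin.zero_eta, Fin.mk_one, Fin.isValue, Matrix.of_apply]
      · linear_combination v*hE - (v*u')*hq0
      · linear_combination u*hF + (u*u')*hq0
      · linear_combination v*hG + (v*v')*hq0
      · linear_combination u*hH - (u*v')*hq0 + (-2*a1)*E1
    · -- N is a scalar multiple of Rz^2
      refine ⟨I*a1*u'/u, div_ne_zero (mul_ne_zero (mul_ne_zero I_ne_zero ha1) hu') hu,
        RzU*RzU, mul_mem RzU_mem RzU_mem, ?_⟩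
      have hgval : ((RzU*RzU : GL (Fin 2) ℂ) : Matrix (Fin 2) (Fin 2) ℂ) = !![-I,0;0,I] := by
        rw [Units.val_mul, RzU_val]
        exact RzSq
      rw [hgval]
      refine smul_right_injective (Matrix (Fin 2) (Fin 2) ℂ) hc ?_
      dsimp only
      rw [smul_smul]
      have hd : 2*u*v*(I*a1*u'/u) = 2*I*v*a1*u' := by field_simp
      rw [hd]
      ext i j
      fin_cases i <;> fin_cases j <;> simp only [Matrix.smul_apply, smul_eq_mul, Matrix.cons_val', Matrix.cons_val_zero,
        Matrix.cons_val_one, Matrix.head_cons, Matrix.head_fin_const, Matrix.empty_val',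
        Matrix.cons_val_fin_one, Fin.zero_eta, Fin.mk_one, Fin.isValue, Matrix.of_apply]
      · linear_combination v*hE - (v*u')*hq0 + (2*v*a1*u')*hI
      · linear_combination u*hF + (u*u')*hq0
      · linear_combination v*hG + (v*v')*hq0
      · linear_combination u*hH - (u*v')*hq0 + (2*a1)*E2 + (-2*v*a1*u')*hI
  · by_cases hp0 : a1 + a3 = 0
    · rcases mul_eq_zero.mp ((mul_eq_zero.mp hQ).resolve_left hq0) with E3 | E4
      · -- N is a scalar multiple of Rx^2
        refine ⟨I*a1*u'/v, div_ne_zero (mul_ne_zero (mul_ne_zero I_ne_zero ha1) hu') hv,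
          RxU*RxU, mul_mem RxU_mem RxU_mem, ?_⟩
        have hgval : ((RxU*RxU : GL (Fin 2) ℂ) : Matrix (Fin 2) (Fin 2) ℂ) = !![0,-I;-I,0] := by
          rw [Units.val_mul, RxU_val]
          exact RxSq
        rw [hgval]
        refine smul_right_injective (Matrix (Fin 2) (Fin 2) ℂ) hc ?_
        dsimp only
        rw [smul_smul]
        have hd : 2*u*v*(I*a1*u'/v) = 2*I*u*a1*u' := by field_simp
        rw [hd]
        ext i j
        fin_cases i <;> fin_cases j <;> simp only [Matrix.smul_apply, smul_eq_mul, Matrix.cons_val', Matrix.cons_val_zero,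
        Matrix.cons_val_one, Matrix.head_cons, Matrix.head_fin_const, Matrix.empty_val',
        Matrix.cons_val_fin_one, Fin.zero_eta, Fin.mk_one, Fin.isValue, Matrix.of_apply]
        · linear_combination v*hE + (v*u')*hp0
        · linear_combination u*hF - (u*u')*hp0 + (2*u*a1*u')*hI
        · linear_combination v*hG - (v*v')*hp0 + (-2*a1)*E3 + (2*a1*u*u')*hI
        · linear_combination u*hH + (u*v')*hp0
      · -- N is a scalar multiple of Ry^2
        refine ⟨-(a1*u')/v, div_ne_zero (neg_ne_zero.mpr (mul_ne_zero ha1 hu')) hv,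
          RyU*RyU, mul_mem RyU_mem RyU_mem, ?_⟩
        have hgval : ((RyU*RyU : GL (Fin 2) ℂ) : Matrix (Fin 2) (Fin 2) ℂ) = !![0,-1;1,0] := by
          rw [Units.val_mul, RyU_val]
          exact RySq
        rw [hgval]
        refine smul_right_injective (Matrix (Fin 2) (Fin 2) ℂ) hc ?_
        dsimp only
        rw [smul_smul]
        have hd : 2*u*v*(-(a1*u')/v) = -(2*u*a1*u') := by field_simp
        rw [hd]
        ext i j
        fin_cases i <;> fin_cases j <;> simp only [Matrix.smul_apply, smul_eq_mul, Matrix.cons_val', Matrix.cons_val_zero,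
        Matrix.cons_val_one, Matrix.head_cons, Matrix.head_fin_const, Matrix.empty_val',
        Matrix.cons_val_fin_one, Fin.zero_eta, Fin.mk_one, Fin.isValue, Matrix.of_apply]
        · linear_combination v*hE + (v*u')*hp0
        · linear_combination u*hF - (u*u')*hp0
        · linear_combination v*hG - (v*v')*hp0 + (2*a1)*E4
        · linear_combination u*hH + (u*v')*hp0
    · -- both nonzero : contradiction
      exfalso
      have hX := mul_eq_zero.mp ((mul_eq_zero.mp hQ).resolve_left hq0)
      have hY := mul_eq_zero.mp ((mul_eq_zero.mp hP).resolve_left hp0)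
      have huv' : u'*v' ≠ 0 := mul_ne_zero hu' hv'
      apply h4
      rcases hX with E | E <;> rcases hY with F | F
      · have hsq : u^2 - v^2 = 0 := by
          rcases mul_eq_zero.mp (show (u^2 - v^2)*(u'*v') = 0 by
            linear_combination (u*v')*E - (v*v')*F) with k | k
          · exact k
          · exact absurd k huv'
        linear_combination (u^2+v^2)*hsq
      · have hsq : u^2 + v^2 = 0 := by
          rcases mul_eq_zero.mp (show (u^2 + v^2)*(u'*v') = 0 by
            linear_combination (u*v')*E + (v*v')*F) with k | k
          · exact k
          · exact absurd k huv'
        linear_combination (u^2-v^2)*hsq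
      · have hsq : u^2 + v^2 = 0 := by
          rcases mul_eq_zero.mp (show (u^2 + v^2)*(u'*v') = 0 by
            linear_combination (v*u')*E - (u*u')*F) with k | k
          · exact k
          · exact absurd k huv'
        linear_combination (u^2-v^2)*hsq
      · have hsq : u^2 - v^2 = 0 := by
          rcases mul_eq_zero.mp (show (u^2 - v^2)*(u'*v') = 0 by
            linear_combination -((v*u')*E) + (u*u')*F) with k | k
          · exact k
          · exact absurd k huv'
        linear_combination (u^2+v^2)*hsq
lemma reduce3 {N : Matrix (Fin 2) (Fin 2) ℂ} {u v u' v' : ℂ} {σ : Fin 4 → Fin 4}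
    (hg : GoodP u v) (hg' : GoodP u' v') (hσ : Function.Injective σ)
    (h0 : σ 0 = 0) (h1 : σ 1 = 1) (h2 : σ 2 = 2)
    (hS : SysP N u v u' v' σ) : ConcP N := by
  have h3 : σ 3 = 3 := by
    rcases fin4cases (σ 3) with h | h | h | h
    · exact absurd (hσ (h.trans h0.symm)) (by decide)
    · exact absurd (hσ (h.trans h1.symm)) (by decide)
    · exact absurd (hσ (h.trans h2.symm)) (by decide)
    · exact h
  obtain ⟨hu, hv, h4⟩ := hg
  obtain ⟨hu', hv', _⟩ := hg'
  apply core hu hv h4 hu' hv'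
  intro i
  obtain ⟨a, ha, he⟩ := hS i
  refine ⟨a, ha, ?_⟩
  rcases fin4cases i with rfl | rfl | rfl | rfl
  · rw [h0] at he; exact he
  · rw [h1] at he; exact he
  · rw [h2] at he; exact he
  · rw [h3] at he; exact he

lemma reduce2 {N : Matrix (Fin 2) (Fin 2) ℂ} {u v u' v' : ℂ} {σ : Fin 4 → Fin 4}
    (hg : GoodP u v) (hg' : GoodP u' v') (hσ : Function.Injective σ)
    (h0 : σ 0 = 0) (h1 : σ 1 = 1)
    (hS : SysP N u v u' v' σ) : ConcP N := by
  rcases fin4cases (σ 2) with h | h | h | h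
  · exact absurd (hσ (h.trans h0.symm)) (by decide)
  · exact absurd (hσ (h.trans h1.symm)) (by decide)
  · exact reduce3 hg hg' hσ h0 h1 h hS
  · apply conc_transfer RxU RxU_mem
    refine reduce3 hg (goodRx hg')
      ((show Function.Injective (![0,1,3,2] : Fin 4 → Fin 4) from by decide).comp hσ)
      (by rw [Function.comp_apply, h0]; decide)
      (by rw [Function.comp_apply, h1]; decide)
      (by rw [Function.comp_apply, h]; decide)
      (sys_comp (sysRx u' v') hS)

lemma reduce1 {N : Matrix (Fin 2) (Fin 2) ℂ} {u v u' v' : ℂ} {σ : Fin 4 → Fin 4}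
    (hg : GoodP u v) (hg' : GoodP u' v') (hσ : Function.Injective σ)
    (h0 : σ 0 = 0)
    (hS : SysP N u v u' v' σ) : ConcP N := by
  rcases fin4cases (σ 1) with h | h | h | h
  · exact absurd (hσ (h.trans h0.symm)) (by decide)
  · exact reduce2 hg hg' hσ h0 h hS
  · apply conc_transfer RyU RyU_mem
    refine reduce2 hg (goodRy hg')
      ((show Function.Injective (![0,2,1,3] : Fin 4 → Fin 4) from by decide).comp hσ)
      (by rw [Function.comp_apply, h0]; decide)
      (by rw [Function.comp_apply, h]; decide)
      (sys_comp (sysRy u' v') hS)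
  · apply conc_transfer RzU RzU_mem
    refine reduce2 hg (goodRz hg')
      ((show Function.Injective (![0,3,2,1] : Fin 4 → Fin 4) from by decide).comp hσ)
      (by rw [Function.comp_apply, h0]; decide)
      (by rw [Function.comp_apply, h]; decide)
      (sys_comp (sysRz u' v') hS)

lemma reduce0 {N : Matrix (Fin 2) (Fin 2) ℂ} {u v u' v' : ℂ} {σ : Fin 4 → Fin 4}
    (hg : GoodP u v) (hg' : GoodP u' v') (hσ : Function.Injective σ)
    (hS : SysP N u v u' v' σ) : ConcP N := by
  rcases fin4cases (σ 0) with h | h | h | h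
  · exact reduce1 hg hg' hσ h hS
  · apply conc_transfer (RxU * RxU) (mul_mem RxU_mem RxU_mem)
    refine reduce1 hg hg'
      ((show Function.Injective (![1,0,3,2] : Fin 4 → Fin 4) from by decide).comp hσ)
      (by rw [Function.comp_apply, h]; decide)
      (sys_comp (sysX2 u' v') hS)
  · apply conc_transfer (RzU * RzU) (mul_mem RzU_mem RzU_mem)
    refine reduce1 hg hg'
      ((show Function.Injective (![2,3,0,1] : Fin 4 → Fin 4) from by decide).comp hσ)
      (by rw [Function.comp_apply, h]; decide)
      (sys_comp (sysZ2 u' v') hS)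
  · apply conc_transfer (RyU * RyU) (mul_mem RyU_mem RyU_mem)
    refine reduce1 hg hg'
      ((show Function.Injective (![3,2,1,0] : Fin 4 → Fin 4) from by decide).comp hσ)
      (by rw [Function.comp_apply, h]; decide)
      (sys_comp (sysY2 u' v') hS)
lemma mem_normal {w : ℂ} (i : Fin 4) (h : slotV i w 1 ≠ 0) :
    Projectivization.mk ℂ (slotV i w 1) h ∈ normalSystem w := by
  rcases fin4cases i with rfl | rfl | rfl | rfl <;>
    simp only [normalSystem, Set.mem_insert_iff, Set.mem_singleton_iff]
  · exact Or.inl rfl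
  · exact Or.inr (Or.inl rfl)
  · exact Or.inr (Or.inr (Or.inl rfl))
  · exact Or.inr (Or.inr (Or.inr rfl))

lemma good_of_mem {w : ℂ} (hw : w ≠ 0) {q₁ q₂ q₃ : ℙ ℂ (Fin 2 → ℂ)}
    (m1 : q₁ ∈ normalSystem w) (m2 : q₂ ∈ normalSystem w) (m3 : q₃ ∈ normalSystem w)
    (d12 : q₁ ≠ q₂) (d13 : q₁ ≠ q₃) (d23 : q₂ ≠ q₃) : GoodP w 1 := by
  refine ⟨hw, one_ne_zero, ?_⟩
  intro h4
  have h4' : (w^2 - 1)*(w^2 + 1) = 0 := by linear_combination h4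
  rcases mul_eq_zero.mp h4' with h2 | h2
  · have hAB : projPt 1 w (Or.inl one_ne_zero) = projPt w 1 (Or.inr one_ne_zero) := by
      refine (Projectivization.mk_eq_mk_iff' ℂ _ _ _ _).mpr ⟨w, ?_⟩
      funext j
      fin_cases j <;> simp
      linear_combination h2
    have hCD : projPt (-1) w (Or.inl (neg_ne_zero.mpr one_ne_zero)) =
        projPt (-w) 1 (Or.inr one_ne_zero) := by
      refine (Projectivization.mk_eq_mk_iff' ℂ _ _ _ _).mpr ⟨w, ?_⟩
      funext j
      fin_cases j <;> simp
      linear_combination h2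
    have collapse : ∀ q, q ∈ normalSystem w →
        q = projPt w 1 (Or.inr one_ne_zero) ∨ q = projPt (-w) 1 (Or.inr one_ne_zero) := by
      intro q hq
      simp only [normalSystem, Set.mem_insert_iff, Set.mem_singleton_iff] at hq
      rcases hq with rfl | rfl | rfl | rfl
      · exact Or.inl rfl
      · exact Or.inl hAB
      · exact Or.inr rfl
      · exact Or.inr hCD
    rcases collapse q₁ m1 with e1 | e1 <;> rcases collapse q₂ m2 with e2 | e2 <;>
      rcases collapse q₃ m3 with e3 | e3 <;>
      first
        | exact d12 (e1.trans e2.symm)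
        | exact d13 (e1.trans e3.symm)
        | exact d23 (e2.trans e3.symm)
  · have hAD : projPt (-1) w (Or.inl (neg_ne_zero.mpr one_ne_zero)) =
        projPt w 1 (Or.inr one_ne_zero) := by
      refine (Projectivization.mk_eq_mk_iff' ℂ _ _ _ _).mpr ⟨w, ?_⟩
      funext j
      fin_cases j <;> simp
      linear_combination h2
    have hBC : projPt (-w) 1 (Or.inr one_ne_zero) = projPt 1 w (Or.inl one_ne_zero) := by
      refine (Projectivization.mk_eq_mk_iff' ℂ _ _ _ _).mpr ⟨-w, ?_⟩
      funext j
      fin_cases j <;> simp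
      linear_combination -h2
    have collapse : ∀ q, q ∈ normalSystem w →
        q = projPt w 1 (Or.inr one_ne_zero) ∨ q = projPt 1 w (Or.inl one_ne_zero) := by
      intro q hq
      simp only [normalSystem, Set.mem_insert_iff, Set.mem_singleton_iff] at hq
      rcases hq with rfl | rfl | rfl | rfl
      · exact Or.inl rfl
      · exact Or.inr rfl
      · exact Or.inr hBC
      · exact Or.inl hAD
    rcases collapse q₁ m1 with e1 | e1 <;> rcases collapse q₂ m2 with e2 | e2 <;>
      rcases collapse q₃ m3 with e3 | e3 <;>
      first
        | exact d12 (e1.trans e2.symm)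
        | exact d13 (e1.trans e3.symm)
        | exact d23 (e2.trans e3.symm)

end NormalAux

open NormalAux in
/-- Uniqueness part of the normal-form proposition: if two Möbius transformations map the
same quadruple of pairwise distinct points onto normal systems, then they differ by a nonzero
scalar multiple of an element of the group `𝒢₂₄` generated by `Rx`, `Ry`, `Rz`. -/
theorem mobius_to_normal_system_unique_up_to_G24
    (p₁ p₂ p₃ p₄ : ℙ ℂ (Fin 2 → ℂ))
    (h12 : p₁ ≠ p₂) (h13 : p₁ ≠ p₃) (h14 : p₁ ≠ p₄)
    (h23 : p₂ ≠ p₃) (h24 : p₂ ≠ p₄) (h34 : p₃ ≠ p₄)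
    (M M' : Matrix (Fin 2) (Fin 2) ℂ) (hMu : IsUnit M) (hM'u : IsUnit M')
    (hM : Function.Injective M.mulVecLin) (hM' : Function.Injective M'.mulVecLin)
    (hnorm : ∃ z : ℂ, z ≠ 0 ∧
      Projectivization.map M.mulVecLin hM '' {p₁, p₂, p₃, p₄} = normalSystem z)
    (hnorm' : ∃ z' : ℂ, z' ≠ 0 ∧
      Projectivization.map M'.mulVecLin hM' '' {p₁, p₂, p₃, p₄} = normalSystem z') :
    ∃ (κ : ℂ) (_ : κ ≠ 0) (g : GL (Fin 2) ℂ) (_ : g ∈ G24),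
      M' * M⁻¹ = κ • (g : Matrix (Fin 2) (Fin 2) ℂ) := by
  obtain ⟨z, hz0, hz⟩ := hnorm
  obtain ⟨z', hz'0, hz'⟩ := hnorm'
  have hdet : IsUnit M.det := (Matrix.isUnit_iff_isUnit_det M).mp hMu
  set N := M' * M⁻¹ with hN
  have hNu : IsUnit N := hM'u.mul (Matrix.isUnit_nonsing_inv_iff.mpr hMu)
  have hNM : N * M = M' := by
    rw [hN, Matrix.mul_assoc, Matrix.nonsing_inv_mul M hdet, Matrix.mul_one]
  have hNinj : Function.Injective N.mulVecLin := by
    have h' := Matrix.mulVec_injective_iff_isUnit.mpr hNu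
    simpa [Matrix.coe_mulVecLin] using h'
  have hcomp : ∀ p, Projectivization.map M'.mulVecLin hM' p =
      Projectivization.map N.mulVecLin hNinj (Projectivization.map M.mulVecLin hM p) := by
    intro p
    induction p using Projectivization.ind with
    | h vv hvv =>
      rw [Projectivization.map_mk, Projectivization.map_mk, Projectivization.map_mk]
      refine (Projectivization.mk_eq_mk_iff' ℂ _ _ _ _).mpr ⟨1, ?_⟩
      rw [one_smul]
      simp only [Matrix.mulVecLin_apply, Matrix.mulVec_mulVec, hNM]
  have key : Projectivization.map N.mulVecLin hNinj '' normalSystem z = normalSystem z' := by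
    rw [← hz, ← hz', ← Set.image_comp]
    apply Set.image_congr'
    intro p
    exact (hcomp p).symm
  have minj := Projectivization.map_injective M.mulVecLin hM
  have minj' := Projectivization.map_injective M'.mulVecLin hM'
  have fm : ∀ p ∈ ({p₁, p₂, p₃, p₄} : Set (ℙ ℂ (Fin 2 → ℂ))),
      Projectivization.map M.mulVecLin hM p ∈ normalSystem z := by
    intro p hp
    rw [← hz]
    exact ⟨p, hp, rfl⟩
  have fm' : ∀ p ∈ ({p₁, p₂, p₃, p₄} : Set (ℙ ℂ (Fin 2 → ℂ))),
      Projectivization.map M'.mulVecLin hM' p ∈ normalSystem z' := by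
    intro p hp
    rw [← hz']
    exact ⟨p, hp, rfl⟩
  have hGz : GoodP z 1 :=
    good_of_mem hz0 (fm p₁ (by simp)) (fm p₂ (by simp)) (fm p₃ (by simp))
      (minj.ne h12) (minj.ne h13) (minj.ne h23)
  have hGz' : GoodP z' 1 :=
    good_of_mem hz'0 (fm' p₁ (by simp)) (fm' p₂ (by simp)) (fm' p₃ (by simp))
      (minj'.ne h12) (minj'.ne h13) (minj'.ne h23)
  have hmem : ∀ i : Fin 4, ∃ (j : Fin 4) (a : ℂ), a ≠ 0 ∧
      N.mulVec (slotV i z 1) = a • slotV j z' 1 := by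
    intro i
    have hne : slotV i z 1 ≠ 0 := slotV_ne_zero hz0 one_ne_zero i
    have hv0 : N.mulVec (slotV i z 1) ≠ 0 := by
      intro hcon
      apply hne
      apply hNinj
      simp only [Matrix.mulVecLin_apply, hcon, map_zero, Matrix.mulVec_zero]
    have himg : Projectivization.map N.mulVecLin hNinj
        (Projectivization.mk ℂ (slotV i z 1) hne) ∈ normalSystem z' := by
      rw [← key]
      exact ⟨_, mem_normal i hne, rfl⟩
    rw [Projectivization.map_mk] at himg
    simp only [normalSystem, Set.mem_insert_iff, Set.mem_singleton_iff] at himg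
    rcases himg with h | h | h | h
    · obtain ⟨a, ha⟩ := (Projectivization.mk_eq_mk_iff' ℂ _ _ _ _).mp h
      refine ⟨0, a, ?_, ?_⟩
      · rintro rfl
        rw [zero_smul] at ha
        exact hv0 (by simpa [Matrix.mulVecLin_apply] using ha.symm)
      · simpa [Matrix.mulVecLin_apply] using ha.symm
    · obtain ⟨a, ha⟩ := (Projectivization.mk_eq_mk_iff' ℂ _ _ _ _).mp h
      refine ⟨1, a, ?_, ?_⟩
      · rintro rfl
        rw [zero_smul] at ha
        exact hv0 (by simpa [Matrix.mulVecLin_apply] using ha.symm)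
      · simpa [Matrix.mulVecLin_apply] using ha.symm
    · obtain ⟨a, ha⟩ := (Projectivization.mk_eq_mk_iff' ℂ _ _ _ _).mp h
      refine ⟨2, a, ?_, ?_⟩
      · rintro rfl
        rw [zero_smul] at ha
        exact hv0 (by simpa [Matrix.mulVecLin_apply] using ha.symm)
      · simpa [Matrix.mulVecLin_apply] using ha.symm
    · obtain ⟨a, ha⟩ := (Projectivization.mk_eq_mk_iff' ℂ _ _ _ _).mp h
      refine ⟨3, a, ?_, ?_⟩
      · rintro rfl
        rw [zero_smul] at ha
        exact hv0 (by simpa [Matrix.mulVecLin_apply] using ha.symm)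
      · simpa [Matrix.mulVecLin_apply] using ha.symm
  choose σ aa haa hvec using hmem
  have hσinj : Function.Injective σ := by
    intro i j hij
    have h1 := hvec i
    have h2 := hvec j
    rw [hij] at h1
    have h3 : (aa j) • (N.mulVec (slotV i z 1)) = (aa i) • (N.mulVec (slotV j z 1)) := by
      rw [h1, h2, smul_smul, smul_smul, mul_comm]
    have h5 : N.mulVecLin ((aa j) • slotV i z 1) = N.mulVecLin ((aa i) • slotV j z 1) := by
      simp only [map_smul, Matrix.mulVecLin_apply]
      exact h3
    exact slot_inj hGz (haa j) (hNinj h5)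
  obtain ⟨κ, hκ, g, hgmem, hfin⟩ :=
    reduce0 hGz hGz' hσinj (fun i => ⟨aa i, haa i, hvec i⟩)
  exact ⟨κ, hκ, g, hgmem, hfin⟩
end

section
/- Let a, b, c, d ∈ ℂ and set A = (b² − c²)·(a² − d²) and B = (c² − d²)·(a² − b²). Then the quartic polynomial p(z) = A·z⁴ − 2·(2B + A)·z² + A is non-degenerate — i.e. A ≠ 0 and p has four pairwise distinct roots in ℂ — if and only if a², b², c², d² are pairwise distinct. -/
/-- Three distinct complex numbers cannot all have the same square. -/
lemma three_sq_eq_false {e z₁ z₂ z₃ : ℂ} (h1 : z₁ ^ 2 = e) (h2 : z₂ ^ 2 = e)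
    (h3 : z₃ ^ 2 = e) (h12 : z₁ ≠ z₂) (h13 : z₁ ≠ z₃) (h23 : z₂ ≠ z₃) : False := by
  have e2 : z₂ = -z₁ := by
    have h : (z₂ - z₁) * (z₂ + z₁) = 0 := by linear_combination h2 - h1
    rcases mul_eq_zero.mp h with h | h
    · exact absurd (sub_eq_zero.mp h).symm h12
    · exact eq_neg_of_add_eq_zero_left h
  have e3 : z₃ = -z₁ := by
    have h : (z₃ - z₁) * (z₃ + z₁) = 0 := by linear_combination h3 - h1
    rcases mul_eq_zero.mp h with h | h
    · exact absurd (sub_eq_zero.mp h).symm h13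
    · exact eq_neg_of_add_eq_zero_left h
  exact h23 (e2.trans e3.symm)

/-- If `A ≠ 0`, `B ≠ 0`, `A + B ≠ 0`, the biquadratic `A z⁴ − 2(2B+A) z² + A`
has four pairwise distinct roots. -/
lemma quartic_roots (A B : ℂ) (hA : A ≠ 0) (hB : B ≠ 0) (hAB : A + B ≠ 0) :
    ∃ z₁ z₂ z₃ z₄ : ℂ, z₁ ≠ z₂ ∧ z₁ ≠ z₃ ∧ z₁ ≠ z₄ ∧ z₂ ≠ z₃ ∧ z₂ ≠ z₄ ∧ z₃ ≠ z₄ ∧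
      ∀ z : ℂ, A * z ^ 4 - 2 * (2 * B + A) * z ^ 2 + A = 0 ↔
        (z = z₁ ∨ z = z₂ ∨ z = z₃ ∨ z = z₄) := by
  obtain ⟨s, hs⟩ := IsAlgClosed.exists_pow_nat_eq (B * (A + B)) (n := 2) (by norm_num)
  set w : ℂ := ((2 * B + A) + 2 * s) / A with hw
  have hwq : A * w ^ 2 - 2 * (2 * B + A) * w + A = 0 := by
    have hinv : A * A⁻¹ = 1 := mul_inv_cancel₀ hA
    rw [hw, div_eq_mul_inv]
    linear_combination (4 * A⁻¹) * hs + ((2 * B + A + 2 * s) ^ 2 * A⁻¹ - A) * hinv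
  obtain ⟨u, hu⟩ := IsAlgClosed.exists_pow_nat_eq w (n := 2) (by norm_num)
  have hu4 : A * u ^ 4 - 2 * (2 * B + A) * u ^ 2 + A = 0 := by
    rw [← hu] at hwq; linear_combination hwq
  have hu0 : u ≠ 0 := by
    intro h
    apply hA
    rw [h] at hu4
    linear_combination hu4
  have hsq1 : u ^ 2 ≠ 1 := by
    intro h1
    have h4 : u ^ 4 = 1 := by rw [show u ^ 4 = (u ^ 2) ^ 2 by ring, h1]; ring
    apply hB
    have h4B : (4 : ℂ) * B = 0 := by
      linear_combination -hu4 + A * h4 - 2 * (2 * B + A) * h1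
    have : (4 : ℂ) ≠ 0 := by norm_num
    exact (mul_eq_zero.mp h4B).resolve_left this
  have hsqm1 : u ^ 2 ≠ -1 := by
    intro h1
    have h4 : u ^ 4 = 1 := by rw [show u ^ 4 = (u ^ 2) ^ 2 by ring, h1]; ring
    apply hAB
    have h4AB : (4 : ℂ) * (A + B) = 0 := by
      linear_combination hu4 - A * h4 + 2 * (2 * B + A) * h1
    have : (4 : ℂ) ≠ 0 := by norm_num
    exact (mul_eq_zero.mp h4AB).resolve_left this
  refine ⟨u, -u, u⁻¹, -u⁻¹, ?_, ?_, ?_, ?_, ?_, ?_, ?_⟩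
  · intro h
    exact hu0 (by linear_combination (1/2 : ℂ) * h)
  · intro h
    apply hsq1
    field_simp at h
    first
    | linear_combination h
    | linear_combination -h
  · intro h
    apply hsqm1
    field_simp at h
    first
    | linear_combination h
    | linear_combination -h
  · intro h
    apply hsqm1
    field_simp at h
    first
    | linear_combination h
    | linear_combination -h
  · intro h
    apply hsq1
    field_simp at h
    first
    | linear_combination h
    | linear_combination -h
  · intro h
    have h2 : u⁻¹ = 0 := by linear_combination (1/2 : ℂ) * h
    exact hu0 (inv_eq_zero.mp h2)
  · intro z
    have hfact : A * z ^ 4 - 2 * (2 * B + A) * z ^ 2 + A =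
        A * (z - u) * (z + u) * (z - u⁻¹) * (z + u⁻¹) := by
      field_simp
      ring_nf
      linear_combination z ^ 2 * hu4
    rw [hfact]
    constructor
    · intro h
      rcases mul_eq_zero.mp h with h | h
      · rcases mul_eq_zero.mp h with h | h
        · rcases mul_eq_zero.mp h with h | h
          · rcases mul_eq_zero.mp h with h | h
            · exact absurd h hA
            · exact Or.inl (sub_eq_zero.mp h)
          · exact Or.inr (Or.inl (eq_neg_of_add_eq_zero_left h))
        · exact Or.inr (Or.inr (Or.inl (sub_eq_zero.mp h)))
      · exact Or.inr (Or.inr (Or.inr (eq_neg_of_add_eq_zero_left h)))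
    · rintro (rfl | rfl | rfl | rfl) <;> ring

/-- The quartic polynomial `A·z⁴ − 2·(2B + A)·z² + A`, with `A = (b²−c²)(a²−d²)` and
`B = (c²−d²)(a²−b²)`, is non-degenerate — `A ≠ 0` and it has four pairwise distinct
roots — iff `a², b², c², d²` are pairwise distinct. -/
theorem quartic_nondegenerate_iff (a b c d : ℂ) :
    ((b ^ 2 - c ^ 2) * (a ^ 2 - d ^ 2) ≠ 0 ∧
      ∃ z₁ z₂ z₃ z₄ : ℂ, z₁ ≠ z₂ ∧ z₁ ≠ z₃ ∧ z₁ ≠ z₄ ∧ z₂ ≠ z₃ ∧ z₂ ≠ z₄ ∧ z₃ ≠ z₄ ∧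
        ∀ z : ℂ, (b ^ 2 - c ^ 2) * (a ^ 2 - d ^ 2) * z ^ 4 -
            2 * (2 * ((c ^ 2 - d ^ 2) * (a ^ 2 - b ^ 2)) +
              (b ^ 2 - c ^ 2) * (a ^ 2 - d ^ 2)) * z ^ 2 +
            (b ^ 2 - c ^ 2) * (a ^ 2 - d ^ 2) = 0 ↔
          (z = z₁ ∨ z = z₂ ∨ z = z₃ ∨ z = z₄)) ↔
    (a ^ 2 ≠ b ^ 2 ∧ a ^ 2 ≠ c ^ 2 ∧ a ^ 2 ≠ d ^ 2 ∧
      b ^ 2 ≠ c ^ 2 ∧ b ^ 2 ≠ d ^ 2 ∧ c ^ 2 ≠ d ^ 2) := by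
  set A : ℂ := (b ^ 2 - c ^ 2) * (a ^ 2 - d ^ 2) with hAdef
  set B : ℂ := (c ^ 2 - d ^ 2) * (a ^ 2 - b ^ 2) with hBdef
  constructor
  · rintro ⟨hA, z₁, z₂, z₃, z₄, h12, h13, h14, h23, h24, h34, hall⟩
    have hp1 : A * z₁ ^ 4 - 2 * (2 * B + A) * z₁ ^ 2 + A = 0 := by
      have := (hall z₁).mpr (Or.inl rfl); linear_combination this
    have hp2 : A * z₂ ^ 4 - 2 * (2 * B + A) * z₂ ^ 2 + A = 0 := by
      have := (hall z₂).mpr (Or.inr (Or.inl rfl)); linear_combination this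
    have hp3 : A * z₃ ^ 4 - 2 * (2 * B + A) * z₃ ^ 2 + A = 0 := by
      have := (hall z₃).mpr (Or.inr (Or.inr (Or.inl rfl))); linear_combination this
    have hBne : B ≠ 0 := by
      intro hB
      have sq : ∀ z : ℂ, A * z ^ 4 - 2 * (2 * B + A) * z ^ 2 + A = 0 → z ^ 2 = 1 := by
        intro z hp
        have h1 : A * (z ^ 2 - 1) ^ 2 = 0 := by linear_combination hp + 4 * z ^ 2 * hB
        have h2 : (z ^ 2 - 1) ^ 2 = 0 := (mul_eq_zero.mp h1).resolve_left hA
        have h3 := pow_eq_zero_iff (n := 2) (by norm_num) |>.mp h2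
        exact sub_eq_zero.mp h3
      exact three_sq_eq_false (sq z₁ hp1) (sq z₂ hp2) (sq z₃ hp3) h12 h13 h23
    have hABne : A + B ≠ 0 := by
      intro hAB
      have sq : ∀ z : ℂ, A * z ^ 4 - 2 * (2 * B + A) * z ^ 2 + A = 0 → z ^ 2 = -1 := by
        intro z hp
        have h1 : A * (z ^ 2 + 1) ^ 2 = 0 := by linear_combination hp + 4 * z ^ 2 * hAB
        have h2 : (z ^ 2 + 1) ^ 2 = 0 := (mul_eq_zero.mp h1).resolve_left hA
        have h3 := pow_eq_zero_iff (n := 2) (by norm_num) |>.mp h2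
        exact eq_neg_of_add_eq_zero_left h3
      exact three_sq_eq_false (sq z₁ hp1) (sq z₂ hp2) (sq z₃ hp3) h12 h13 h23
    rw [hAdef, mul_ne_zero_iff, sub_ne_zero, sub_ne_zero] at hA
    rw [hBdef, mul_ne_zero_iff, sub_ne_zero, sub_ne_zero] at hBne
    have hABfac : A + B = (a ^ 2 - c ^ 2) * (b ^ 2 - d ^ 2) := by
      rw [hAdef, hBdef]; ring
    rw [hABfac, mul_ne_zero_iff, sub_ne_zero, sub_ne_zero] at hABne
    exact ⟨hBne.2, hABne.1, hA.2, hA.1, hABne.2, hBne.1⟩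
  · rintro ⟨hab, hac, had, hbc, hbd, hcd⟩
    have hA : A ≠ 0 := mul_ne_zero (sub_ne_zero.mpr hbc) (sub_ne_zero.mpr had)
    have hB : B ≠ 0 := mul_ne_zero (sub_ne_zero.mpr hcd) (sub_ne_zero.mpr hab)
    have hAB : A + B ≠ 0 := by
      have hABfac : A + B = (a ^ 2 - c ^ 2) * (b ^ 2 - d ^ 2) := by
        rw [hAdef, hBdef]; ring
      rw [hABfac]
      exact mul_ne_zero (sub_ne_zero.mpr hac) (sub_ne_zero.mpr hbd)
    obtain ⟨z₁, z₂, z₃, z₄, h12, h13, h14, h23, h24, h34, hall⟩ :=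
      quartic_roots A B hA hB hAB
    exact ⟨hA, z₁, z₂, z₃, z₄, h12, h13, h14, h23, h24, h34, hall⟩
end
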